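/- arXiv:2509.00201 — 2 statements merged into one kernel-verified Lean document; each statement's English description precedes it below -/
import Mathlib

section
/- Cardano's depressed cubic: if p and q are real numbers with (q/2)² + (p/3)³ ≥ 0, then setting u = (-q/2 + √((q/2)² + (p/3)³))^(1/3) and v = (-q/2 - √((q/2)² + (p/3)³))^(1/3) (real cube roots), the number x = u + v satisfies x³ + p·x + q = 0. -/
/-- The real cube root of a real number (sign-preserving). -/
noncomputable def realCbrt (t : ℝ) : ℝ :=
  if t < 0 then -((-t) ^ ((1 : ℝ) / 3)) else t ^ ((1 : ℝ) / 3)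

lemma realCbrt_cube (t : ℝ) : (realCbrt t) ^ 3 = t := by
  unfold realCbrt
  have key : ∀ s : ℝ, 0 ≤ s → (s ^ ((1:ℝ)/3)) ^ 3 = s := by
    intro s hs
    rw [← Real.rpow_natCast (s ^ ((1:ℝ)/3)) 3, ← Real.rpow_mul hs]
    norm_num
  split_ifs with h
  · have := key (-t) (by linarith)
    rw [neg_pow]
    rw [this]; norm_num
  · exact key t (by linarith)

lemma cube_inj : Function.Injective (fun x : ℝ => x ^ 3) :=
  (Odd.strictMono_pow (by decide : Odd 3)).injective

lemma realCbrt_eq_of_cube (x t : ℝ) (h : x ^ 3 = t) : realCbrt t = x := by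
  apply cube_inj
  simp [realCbrt_cube, h]

theorem cardano_depressed_cubic (p q : ℝ)
    (h : (q / 2) ^ 2 + (p / 3) ^ 3 ≥ 0) :
    let u := realCbrt (-q / 2 + Real.sqrt ((q / 2) ^ 2 + (p / 3) ^ 3))
    let v := realCbrt (-q / 2 - Real.sqrt ((q / 2) ^ 2 + (p / 3) ^ 3))
    (u + v) ^ 3 + p * (u + v) + q = 0 := by
  intro u v
  set s := Real.sqrt ((q / 2) ^ 2 + (p / 3) ^ 3) with hs
  have hs2 : s ^ 2 = (q / 2) ^ 2 + (p / 3) ^ 3 := Real.sq_sqrt h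
  have hu3 : u ^ 3 = -q / 2 + s := realCbrt_cube _
  have hv3 : v ^ 3 = -q / 2 - s := realCbrt_cube _
  have huv : u * v = -(p / 3) := by
    apply cube_inj
    show (u * v) ^ 3 = (-(p/3)) ^ 3
    rw [mul_pow, hu3, hv3]
    ring_nf
    nlinarith [hs2]
  have : (u + v) ^ 3 = u ^ 3 + v ^ 3 + 3 * (u * v) * (u + v) := by ring
  rw [this, hu3, hv3, huv]
  ring
end

section
/- A polynomial over a field of characteristic zero is solvable by radicals if and only if the Galois group of its splitting field is a solvable group. -/
/-!
If `Gal p` is solvable, adjoin to `F` a primitive `n`-th root of unity `ζ`, where `n = |Gal p|`;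
`ζ` is itself a radical. Over `K = F(ζ)` the Galois group of the splitting field `L` of `p` embeds
in `Gal p`, so it is solvable of order dividing `n`. The fixed field of a maximal subgroup
containing its commutator subgroup is then a cyclic extension of `K`, generated by a radical by
Kummer theory, and induction on the degree shows that all of `L` is radical over `K`.

Conversely, Mathlib's half of Abel–Ruffini says that an irreducible polynomial with a root
solvable by radicals has solvable Galois group; apply it to the irreducible factors of `p`.
-/

open Polynomial IntermediateField Module

universe u

section SolvableByRad

variable {F E E' : Type*} [Field F] [Field E] [Field E'] [Algebra F E] [Algebra F E']

theorem isSolvableByRad_iff_mem_solvableByRad {x : E} :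
    IsSolvableByRad F x ↔ x ∈ solvableByRad F E := by
  constructor
  · intro h
    induction h with
    | base a => exact IntermediateField.algebraMap_mem _ a
    | add _ _ _ _ hα hβ => exact add_mem hα hβ
    | neg _ _ hα => exact neg_mem hα
    | mul _ _ _ _ hα hβ => exact mul_mem hα hβ
    | inv _ _ hα => exact inv_mem hα
    | rad _ _ hn _ hα => exact solvableByRad.rad_mem hn hα
  · intro h
    induction h using solvableByRad.induction with
    | mem a => exact .base a
    | add _ _ _ _ hx hy => exact .add _ _ hx hy
    | mul _ _ _ _ hx hy => exact .mul _ _ hx hy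
    | rad n _ hn _ hx => exact .rad _ n hn hx

theorem map_mem_solvableByRad (f : E →ₐ[F] E') {x : E} (hx : x ∈ solvableByRad F E) :
    f x ∈ solvableByRad F E' := by
  induction hx using solvableByRad.induction with
  | mem a => rw [f.commutes]; exact IntermediateField.algebraMap_mem _ a
  | add _ _ _ _ hx hy => rw [map_add]; exact add_mem hx hy
  | mul _ _ _ _ hx hy => rw [map_mul]; exact mul_mem hx hy
  | rad n _ hn _ hx => exact solvableByRad.rad_mem hn (by rwa [← map_pow])

theorem mem_solvableByRad_of_tower {M : Type*} [Field M] [Algebra F M] [Algebra M E]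
    [IsScalarTower F M E] (hM : ∀ y : M, algebraMap M E y ∈ solvableByRad F E) {x : E}
    (hx : x ∈ solvableByRad M E) : x ∈ solvableByRad F E := by
  induction hx using solvableByRad.induction with
  | mem y => exact hM y
  | add _ _ _ _ hx hy => exact add_mem hx hy
  | mul _ _ _ _ hx hy => exact mul_mem hx hy
  | rad n _ hn _ hx => exact solvableByRad.rad_mem hn hx

end SolvableByRad

section CyclicQuotient

variable {G : Type*} [Group G]

theorem Subgroup.isCyclic_quotient_of_isCoatom {H : Subgroup G} [H.Normal] (hH : IsCoatom H) :
    IsCyclic (G ⧸ H) := by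
  obtain ⟨g, hg⟩ := SetLike.exists_of_lt hH.lt_top
  have hsup : H ⊔ Subgroup.zpowers g = ⊤ :=
    hH.2 _ (SetLike.lt_iff_le_and_exists.2
      ⟨le_sup_left, g, Subgroup.mem_sup_right (Subgroup.mem_zpowers g), hg.2⟩)
  refine isCyclic_iff_exists_zpowers_eq_top.2 ⟨QuotientGroup.mk g, ?_⟩
  have := congrArg (Subgroup.map (QuotientGroup.mk' H)) hsup
  rwa [Subgroup.map_sup, MonoidHom.map_zpowers, QuotientGroup.map_mk'_self, bot_sup_eq,
    Subgroup.map_top_of_surjective _ (QuotientGroup.mk'_surjective H)] at this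

theorem Group.IsSolvable.exists_isCoatom_commutator_le [Finite G] [Group.IsSolvable G]
    [Nontrivial G] : ∃ H : Subgroup G, IsCoatom H ∧ commutator G ≤ H :=
  (eq_top_or_exists_le_coatom (commutator G)).resolve_left
    (Group.IsSolvable.commutator_lt_top_of_nontrivial G).ne

end CyclicQuotient

theorem solvableByRad_eq_top_of_isCyclic {K L : Type*} [Field K] [Field L] [Algebra K L]
    [FiniteDimensional K L] [IsGalois K L] [IsCyclic Gal(L/K)]
    (hK : (primitiveRoots (finrank K L) K).Nonempty) : solvableByRad K L = ⊤ := by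
  obtain ⟨α, ⟨a, ha⟩, hα⟩ := exists_root_adjoin_eq_top_of_isCyclic K L hK
  rw [eq_top_iff, ← hα, adjoin_simple_le_iff]
  exact solvableByRad.rad_mem finrank_pos.ne' (ha ▸ IntermediateField.algebraMap_mem _ a)

-- `K` and `L` share a universe because the induction replaces `K` by an intermediate field of `L`.
theorem solvableByRad_eq_top_of_isSolvable {K L : Type u} [Field K] [Field L] [Algebra K L]
    [FiniteDimensional K L] [IsGalois K L] [Group.IsSolvable Gal(L/K)] {ζ : K}
    (hζ : IsPrimitiveRoot ζ (finrank K L)) : solvableByRad K L = ⊤ := by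
  induction hn : finrank K L using Nat.strong_induction_on generalizing K with
  | _ n ih =>
  subst hn
  rcases subsingleton_or_nontrivial Gal(L/K) with hG | hG
  · have : finrank K L = 1 := by rw [← IsGalois.card_aut_eq_finrank, Nat.card_unique]
    rw [eq_top_iff, ← IntermediateField.bot_eq_top_iff_finrank_eq_one.2 this]
    exact bot_le
  obtain ⟨H, hH, hcomm⟩ := Group.IsSolvable.exists_isCoatom_commutator_le (G := Gal(L/K))
  have : H.Normal := .of_commutator_le _ hcomm
  have : IsCyclic (Gal(L/K) ⧸ H) := Subgroup.isCyclic_quotient_of_isCoatom hH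
  set M := fixedField H
  have : IsCyclic Gal(M/K) :=
    isCyclic_of_surjective _ (IsGalois.normalAutEquivQuotient H).surjective
  have htower := finrank_mul_finrank K M L
  have hM : solvableByRad K M = ⊤ := by
    refine solvableByRad_eq_top_of_isCyclic ⟨ζ ^ finrank M L, ?_⟩
    rw [mem_primitiveRoots finrank_pos]
    exact hζ.pow finrank_pos (htower.symm.trans (mul_comm _ _))
  have : Group.IsSolvable Gal(L/M) := by
    have e := (fixingSubgroupEquiv M).symm.trans
      (MulEquiv.subgroupCongr (fixingSubgroup_fixedField H))
    exact Group.isSolvable_of_isSolvable_injective (f := e.toMonoidHom) e.injective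
  have hlt : finrank M L < finrank K L := by
    rw [finrank_fixedField_eq_card, ← IsGalois.card_aut_eq_finrank]
    exact lt_of_le_of_ne H.card_le_card_group (mt H.card_eq_iff_eq_top.1 hH.1)
  have hL := ih _ hlt (K := M) (ζ := algebraMap K M ζ ^ finrank K M)
    ((hζ.map_of_injective (algebraMap K M).injective).pow finrank_pos
      (by rw [← htower, mul_comm])) rfl
  refine eq_top_iff.2 fun x _ => mem_solvableByRad_of_tower (fun y => ?_) (hL ▸ mem_top)
  exact map_mem_solvableByRad M.val (hM ▸ mem_top)

section BaseChange

variable {F K E : Type*} [Field F] [Field K] [Field E] [Algebra F K] [Algebra K E] [Algebra F E]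
  [IsScalarTower F K E]

theorem Polynomial.rootSet_map_algebraMap (p : F[X]) :
    (p.map (algebraMap F K)).rootSet E = p.rootSet E := by
  simp only [rootSet, aroots_map]

theorem Polynomial.Gal.exists_injective_of_isSplittingField_map (p : F[X])
    [IsSplittingField K E (p.map (algebraMap F K))] :
    ∃ f : Gal(E/K) →* p.Gal, Function.Injective f := by
  have : Fact ((p.map (algebraMap F E)).Splits) := by
    rw [IsScalarTower.algebraMap_eq F K E, ← map_map]
    exact ⟨IsSplittingField.splits E _⟩
  refine ⟨(restrict p E).comp (AlgEquiv.restrictScalarsHom F), (injective_iff_map_eq_one _).2 ?_⟩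
  intro σ hσ
  have hroots : ∀ x ∈ (p.map (algebraMap F K)).rootSet E, σ x = x := fun x hx => by
    rw [rootSet_map_algebraMap] at hx
    have h := restrict_smul (σ.restrictScalars F) ⟨x, hx⟩
    rw [show restrict p E (σ.restrictScalars F) = 1 from hσ, one_smul] at h
    exact h.symm
  exact AlgEquiv.coe_algHom_injective
    (AlgHom.ext_of_adjoin_eq_top (IsSplittingField.adjoin_rootSet E _) hroots)

end BaseChange

section AbelRuffini

variable {F Ω : Type*} [Field F] [Field Ω] [Algebra F Ω] [IsAlgClosed Ω]

theorem isSolvable_gal_of_rootSet_subset_solvableByRad (p : F[X])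
    (h : p.rootSet Ω ⊆ solvableByRad F Ω) : Group.IsSolvable p.Gal := by
  induction p using WfDvdMonoid.induction_on_irreducible with
  | zero => infer_instance
  | unit u hu =>
    obtain ⟨c, -, rfl⟩ := Polynomial.isUnit_iff.1 hu
    infer_instance
  | mul a i ha hi ih =>
    have hroot {x : Ω} (hx : aeval x i = 0 ∨ aeval x a = 0) : x ∈ solvableByRad F Ω := by
      refine h ((mem_rootSet_of_ne (mul_ne_zero hi.ne_zero ha)).2 ?_)
      rcases hx with hx | hx <;> simp [hx]
    obtain ⟨x, hx⟩ := IsAlgClosed.exists_aeval_eq_zero Ω i (degree_pos_of_irreducible hi).ne'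
    exact gal_mul_isSolvable (isSolvable_gal_of_irreducible (hroot (.inl hx)) hi hx)
      (ih fun y hy => hroot (.inr ((mem_rootSet_of_ne ha).1 hy)))

theorem rootSet_subset_solvableByRad_of_isSolvable [CharZero F] (p : F[X])
    [Group.IsSolvable p.Gal] : p.rootSet Ω ⊆ solvableByRad F Ω := by
  set n := Nat.card p.Gal
  have : NeZero n := ⟨Nat.card_pos.ne'⟩
  have : CharZero Ω := charZero_of_injective_algebraMap (algebraMap F Ω).injective
  obtain ⟨ζ, hζ⟩ := HasEnoughRootsOfUnity.exists_primitiveRoot Ω n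
  set K := F⟮ζ⟯
  have hK : K ≤ solvableByRad F Ω := by
    refine adjoin_simple_le_iff.2 (solvableByRad.rad_mem (NeZero.ne n) ?_)
    rw [hζ.pow_eq_one]
    exact one_mem _
  set L := adjoin K (p.rootSet Ω)
  have : IsSplittingField K L (p.map (algebraMap F K)) := by
    have := adjoin_rootSet_isSplittingField
      (IsAlgClosed.splits ((p.map (algebraMap F K)).map (algebraMap K Ω)))
    rwa [rootSet_map_algebraMap] at this
  have : FiniteDimensional K L := IsSplittingField.finiteDimensional L (p.map (algebraMap F K))
  have : Normal K L := Normal.of_isSplittingField (p.map (algebraMap F K))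
  have : IsGalois K L := ⟨⟩
  obtain ⟨f, hf⟩ := Gal.exists_injective_of_isSplittingField_map (K := K) (E := L) p
  have : Group.IsSolvable Gal(L/K) := Group.isSolvable_of_isSolvable_injective hf
  have hdvd : finrank K L ∣ n :=
    IsGalois.card_aut_eq_finrank K L ▸ Subgroup.card_dvd_of_injective f hf
  have hζK : IsPrimitiveRoot (⟨ζ, mem_adjoin_simple_self F ζ⟩ : K) n :=
    hζ.of_map_of_injective (f := algebraMap K Ω) (algebraMap K Ω).injective
  have hL := solvableByRad_eq_top_of_isSolvable
    (hζK.pow (NeZero.pos n) (Nat.div_mul_cancel hdvd).symm)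
  intro x hx
  have hxL : x ∈ L := subset_adjoin K _ hx
  exact mem_solvableByRad_of_tower (fun y => hK y.2)
    (map_mem_solvableByRad L.val (hL ▸ mem_top : (⟨x, hxL⟩ : L) ∈ solvableByRad K L))

end AbelRuffini

theorem galois_solvability_criterion (F : Type*) [Field F] [CharZero F]
    (p : Polynomial F) (hp : p ≠ 0) :
    (∀ x : AlgebraicClosure F, Polynomial.aeval x p = 0 → IsSolvableByRad F x) ↔
      IsSolvable p.Gal := by
  simp only [isSolvableByRad_iff_mem_solvableByRad, ← mem_rootSet_of_ne hp]
  refine ⟨isSolvable_gal_of_rootSet_subset_solvableByRad p, fun h => ?_⟩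
  have : Group.IsSolvable p.Gal := h
  exact rootSet_subset_solvableByRad_of_isSolvable p
end
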